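/- Let v = (v_1, …, v_N) be defined by v_i(q) = min{ Σ_{j∈J_i} a_{ij}(q)·m_{ij}·(e^{b_{ij}/m_{ij}} − 1) : m_{ij} > 0, Σ_{j∈J_i} m_{ij} ≤ 1 }, where a_{ij}(q) = (Σ_{k≠i} q_k·g_{kj} + σ²)/g_{ij} and b_{ij} = (ln 2)·D_{ij}/B. Then v is scalable: for every q ∈ ℝ^N with q ≥ 0 and every α > 1, α·v(q) > v(α·q) holds strictly in every component. -/
import Mathlib


open Finset

/-- The set of power values `Σ_{j∈J_i} a_{ij}(q)·m_j·(e^{b_{ij}/m_j} − 1)` achievable by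
base station `i` over time allocations `m` with `m_j > 0` and `Σ_j m_j ≤ 1`, where
`a_{ij}(q) = (Σ_{k≠i} q_k·g_{k,(i,j)} + σ²)/g_{i,(i,j)}` and `b_{ij} = (ln 2)·D_{ij}/B`.
Its infimum is the interference function value `v_i(q)`. -/
noncomputable def vValueSet (N : ℕ) (K : Fin N → ℕ) (B σ2 : ℝ)
    (g : Fin N → (i : Fin N) → Fin (K i) → ℝ)
    (D : (i : Fin N) → Fin (K i) → ℝ)
    (q : Fin N → ℝ) (i : Fin N) : Set ℝ :=
  { v : ℝ | ∃ m : Fin (K i) → ℝ, (∀ j, 0 < m j) ∧ (∑ j, m j ≤ 1) ∧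
      v = ∑ j, ((∑ k ∈ Finset.univ.erase i, q k * g k i j) + σ2) / g i i j *
        m j * (Real.exp (Real.log 2 * D i j / B / m j) - 1) }

/-- Scalability of the interference function `v`: for every `q ≥ 0` and every `α > 1`,
`v(α·q) < α·v(q)` strictly in every component. -/
theorem stmt_14 (N : ℕ) (hN : 1 ≤ N) (K : Fin N → ℕ) (hK : ∀ i, 1 ≤ K i)
    (B σ2 : ℝ) (hB : 0 < B) (hσ : 0 < σ2)
    (g : Fin N → (i : Fin N) → Fin (K i) → ℝ) (hg : ∀ k i j, 0 < g k i j)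
    (D : (i : Fin N) → Fin (K i) → ℝ) (hD : ∀ i j, 0 < D i j)
    (q : Fin N → ℝ) (hq : ∀ k, 0 ≤ q k) (α : ℝ) (hα : 1 < α) :
    ∀ i : Fin N,
      sInf (vValueSet N K B σ2 g D (fun k => α * q k) i)
        < α * sInf (vValueSet N K B σ2 g D q i) := by
  intro i
  have hα0 : (0:ℝ) < α := by linarith
  set b : Fin (K i) → ℝ := fun j => Real.log 2 * D i j / B with hbdef
  have hbpos : ∀ j, 0 < b j := fun j =>
    div_pos (mul_pos (Real.log_pos one_lt_two) (hD i j)) hB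
  set δ : ℝ := (α - 1) * σ2 * ∑ j, b j / g i i j with hδdef
  have hKpos : 0 < K i := hK i
  have hne : (Finset.univ : Finset (Fin (K i))).Nonempty := by
    have : Nonempty (Fin (K i)) := ⟨⟨0, hKpos⟩⟩
    exact Finset.univ_nonempty
  have hδpos : 0 < δ := by
    apply mul_pos (mul_pos (by linarith) hσ)
    exact Finset.sum_pos (fun j _ => div_pos (hbpos j) (hg i i j)) hne
  -- a feasible allocation
  have hmfeas : ∃ m : Fin (K i) → ℝ, (∀ j, 0 < m j) ∧ ∑ j, m j ≤ 1 := by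
    refine ⟨fun _ => 1 / (K i : ℝ), fun j => by positivity, ?_⟩
    have hKne : (K i : ℝ) ≠ 0 := by positivity
    rw [Finset.sum_const, Finset.card_univ, Fintype.card_fin, nsmul_eq_mul,
      mul_one_div, div_self hKne]
  -- nonemptiness of both sets
  have hT1ne : (vValueSet N K B σ2 g D (fun k => α * q k) i).Nonempty := by
    obtain ⟨m, hm, hms⟩ := hmfeas
    exact ⟨_, m, hm, hms, rfl⟩
  have hT0ne : (vValueSet N K B σ2 g D q i).Nonempty := by
    obtain ⟨m, hm, hms⟩ := hmfeas
    exact ⟨_, m, hm, hms, rfl⟩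
  -- boundedness below by 0
  have hbdd : BddBelow (vValueSet N K B σ2 g D (fun k => α * q k) i) := by
    refine ⟨0, fun v hv => ?_⟩
    obtain ⟨m, hm, hms, rfl⟩ := hv
    apply Finset.sum_nonneg
    intro j _
    have hE : 0 ≤ Real.exp (Real.log 2 * D i j / B / m j) - 1 := by
      have : (0:ℝ) ≤ Real.log 2 * D i j / B / m j :=
        le_of_lt (div_pos (hbpos j) (hm j))
      have := Real.one_le_exp this
      linarith
    have hnum : 0 ≤ ((∑ k ∈ Finset.univ.erase i, (α * q k) * g k i j) + σ2) := by
      have : 0 ≤ ∑ k ∈ Finset.univ.erase i, (α * q k) * g k i j :=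
        Finset.sum_nonneg fun k _ =>
          mul_nonneg (mul_nonneg hα0.le (hq k)) (hg k i j).le
      linarith
    exact mul_nonneg (mul_nonneg (div_nonneg hnum (hg i i j).le) (hm j).le) hE
  -- pointwise key inequality
  have key : ∀ (j : Fin (K i)) (m : ℝ), 0 < m →
      ((∑ k ∈ Finset.univ.erase i, (α * q k) * g k i j) + σ2) / g i i j *
        m * (Real.exp (Real.log 2 * D i j / B / m) - 1)
        + (α - 1) * σ2 * (b j / g i i j)
      ≤ α * (((∑ k ∈ Finset.univ.erase i, q k * g k i j) + σ2) / g i i j *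
        m * (Real.exp (Real.log 2 * D i j / B / m) - 1)) := by
    intro j m hm
    have hS : ∑ k ∈ Finset.univ.erase i, (α * q k) * g k i j
        = α * ∑ k ∈ Finset.univ.erase i, q k * g k i j := by
      rw [Finset.mul_sum]; exact Finset.sum_congr rfl fun k _ => by ring
    rw [hS]
    set S := ∑ k ∈ Finset.univ.erase i, q k * g k i j with hSdef
    set E := Real.exp (Real.log 2 * D i j / B / m) - 1 with hEdef
    have hEb : Real.log 2 * D i j / B / m = b j / m := by rw [hbdef]
    have hmE : b j ≤ m * E := by
      have h1 := Real.add_one_le_exp (b j / m)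
      have h2 : b j / m ≤ E := by rw [hEdef, hEb]; linarith
      calc b j = m * (b j / m) := by field_simp
        _ ≤ m * E := mul_le_mul_of_nonneg_left h2 hm.le
    rw [← sub_nonneg]
    have heq : α * ((S + σ2) / g i i j * m * E)
        - ((α * S + σ2) / g i i j * m * E + (α - 1) * σ2 * (b j / g i i j))
        = (α - 1) * σ2 * (m * E - b j) / g i i j := by ring
    rw [heq]
    exact div_nonneg (mul_nonneg (mul_nonneg (by linarith) hσ.le) (by linarith))
      (hg i i j).le
  -- main chain: sInf T1 + δ ≤ α * w for every w in T0
  have hmain : ∀ w ∈ vValueSet N K B σ2 g D q i,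
      sInf (vValueSet N K B σ2 g D (fun k => α * q k) i) + δ ≤ α * w := by
    rintro w ⟨m, hm, hms, rfl⟩
    have hmem : (∑ j, ((∑ k ∈ Finset.univ.erase i, (α * q k) * g k i j) + σ2) / g i i j *
          m j * (Real.exp (Real.log 2 * D i j / B / m j) - 1))
        ∈ vValueSet N K B σ2 g D (fun k => α * q k) i := ⟨m, hm, hms, rfl⟩
    have hle := csInf_le hbdd hmem
    have hsum : (∑ j, ((∑ k ∈ Finset.univ.erase i, (α * q k) * g k i j) + σ2) / g i i j *
          m j * (Real.exp (Real.log 2 * D i j / B / m j) - 1)) + δ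
        ≤ α * ∑ j, ((∑ k ∈ Finset.univ.erase i, q k * g k i j) + σ2) / g i i j *
          m j * (Real.exp (Real.log 2 * D i j / B / m j) - 1) := by
      rw [hδdef, Finset.mul_sum, Finset.mul_sum, ← Finset.sum_add_distrib]
      exact Finset.sum_le_sum fun j _ => key j (m j) (hm j)
    calc sInf (vValueSet N K B σ2 g D (fun k => α * q k) i) + δ
        ≤ (∑ j, ((∑ k ∈ Finset.univ.erase i, (α * q k) * g k i j) + σ2) / g i i j *
          m j * (Real.exp (Real.log 2 * D i j / B / m j) - 1)) + δ := by linarith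
      _ ≤ _ := hsum
  -- conclude
  have hfin : (sInf (vValueSet N K B σ2 g D (fun k => α * q k) i) + δ) / α
      ≤ sInf (vValueSet N K B σ2 g D q i) := by
    apply le_csInf hT0ne
    intro w hw
    rw [div_le_iff₀' hα0]
    exact hmain w hw
  rw [div_le_iff₀' hα0] at hfin
  linarith
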